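/- arXiv:1908.03741 — 4 statements merged into one kernel-verified Lean document; each statement's English description precedes it below -/
import Mathlib

section
/- For any two partitions λ and μ of a positive integer n, if 𝝀 and 𝝁 denote the partitions obtained by subdividing each square of the Young diagrams of λ and μ into d² congruent squares (i.e., if λ = 1^{m₁}2^{m₂}…n^{m_n} then 𝝀 = d^{d m₁}(2d)^{d m₂}…(nd)^{d m_n}), then the irreducible character value χ_𝝀(𝝁) of the symmetric group S_{d²n} is divisible by d!. -/
/-- Murnaghan–Nakayama recursion on beta-sets: `MNchar S α` computes the character
value via successive rim-hook (border-strip) removals encoded by beta-numbers. -/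
def MNchar : Finset ℕ → List ℕ → ℤ
  | S, [] => if S = Finset.range S.card then 1 else 0
  | S, k :: rest =>
      ∑ s ∈ S.filter (fun s => k ≤ s ∧ s - k ∉ S),
        (-1 : ℤ) ^ (S.filter (fun t => s - k < t ∧ t < s)).card *
          MNchar (insert (s - k) (S.erase s)) rest

/-- Canonical beta-set of a partition (given as a multiset of parts). -/
def betaSet (P : Multiset ℕ) : Finset ℕ :=
  ((List.range (P.sort (· ≤ ·)).length).map
    (fun i => (P.sort (· ≤ ·)).getD i 0 + i)).toFinset

/-- Irreducible character of the symmetric group indexed by `lam`, at cycle type `mu`. -/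
def chi (lam mu : Multiset ℕ) : ℤ := MNchar (betaSet lam) (mu.sort (· ≤ ·))

/-- d-fold dilation of a partition: each part p becomes d copies of d*p. -/
def dilate (d : ℕ) (P : Multiset ℕ) : Multiset ℕ :=
  P.bind fun p => Multiset.replicate d (d * p)

/-- Scale every part of a partition by d. -/
def scale (d : ℕ) (P : Multiset ℕ) : Multiset ℕ := P.map (d * ·)

def IsPartitionOf (n : ℕ) (P : Multiset ℕ) : Prop := (∀ p ∈ P, 0 < p) ∧ P.sum = n

def zerosBefore (β : List Bool) (j : ℕ) : ℕ := (β.take j).count false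

/-- Shape of a binary sequence: one part for each `true`, equal to the number of
`false`s to its left (zero parts discarded). -/
def shapeOf (β : List Bool) : Multiset ℕ :=
  ↑((List.range β.length).filterMap fun j =>
      if β.getD j false = true ∧ 0 < zerosBefore β j then some (zerosBefore β j) else none)

/-- The word of a partition: the unique binary sequence starting with 0 and ending
with 1 whose shape is the partition. -/
def word (P : Multiset ℕ) : List Bool :=
  (List.range (P.sup + Multiset.card P)).map fun j => decide (j ∈ betaSet P)

/-- Cells of the Young diagram of a partition. -/
def cells (P : Multiset ℕ) : Finset (ℕ × ℕ) :=
  (Finset.range (Multiset.card P) ×ˢ Finset.range (P.sup + 1)).filter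
    fun x => x.2 < ((P.sort (· ≤ ·)).reverse.getD x.1 0)

def CellAdj (x y : ℕ × ℕ) : Prop :=
  (x.1 = y.1 ∧ (x.2 = y.2 + 1 ∨ y.2 = x.2 + 1)) ∨
  (x.2 = y.2 ∧ (x.1 = y.1 + 1 ∨ y.1 = x.1 + 1))

/-- A set of cells is a rim hook: nonempty, connected, no 2×2 square. -/
def IsRimHook (s : Finset (ℕ × ℕ)) : Prop :=
  s.Nonempty ∧
  (∀ x ∈ s, ∀ y ∈ s, Relation.ReflTransGen (fun u v => v ∈ s ∧ CellAdj u v) x y) ∧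
  ∀ i j : ℕ, ¬((i, j) ∈ s ∧ (i + 1, j) ∈ s ∧ (i, j + 1) ∈ s ∧ (i + 1, j + 1) ∈ s)

/-- A cascade, encoded by its first row and the sequence of 0-1 swap positions
`(aᵢ, bᵢ)` relating consecutive rows. -/
structure Cascade where
  top : List Bool
  swaps : List (ℕ × ℕ)

def applySwaps (r : List Bool) (s : List (ℕ × ℕ)) : List Bool :=
  s.foldl (fun r ab => (r.set ab.1 true).set ab.2 false) r

def cascadeRow (C : Cascade) (i : ℕ) : List Bool := applySwaps C.top (C.swaps.take i)

def cascadeBot (C : Cascade) : List Bool := applySwaps C.top C.swaps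

/-- The defining conditions of a cascade. -/
def Cascade.Valid (C : Cascade) : Prop :=
  C.top.head? = some false ∧ C.top.getLast? = some true ∧
  (∀ i < C.swaps.length,
    (C.swaps.getD i (0, 0)).1 < (C.swaps.getD i (0, 0)).2 ∧
    (C.swaps.getD i (0, 0)).2 < (cascadeRow C i).length ∧
    (cascadeRow C i).getD (C.swaps.getD i (0, 0)).1 true = false ∧
    (cascadeRow C i).getD (C.swaps.getD i (0, 0)).2 false = true) ∧
  ∃ u v, cascadeBot C = List.replicate u true ++ List.replicate v false

def cascadeShape (C : Cascade) : Multiset ℕ := shapeOf C.top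

def cascadeContent (C : Cascade) : List ℕ := C.swaps.map fun ab => ab.2 - ab.1

/-- Crossings of a cascade: pairs (i,j) with row i having a 1 in position j
strictly between the swapped positions aᵢ < j < bᵢ. -/
def cascadeCrossings (C : Cascade) : Finset (ℕ × ℕ) :=
  (Finset.range C.swaps.length ×ˢ Finset.range C.top.length).filter fun ij =>
    (cascadeRow C ij.1).getD ij.2 false = true ∧
    (C.swaps.getD ij.1 (0, 0)).1 < ij.2 ∧ ij.2 < (C.swaps.getD ij.1 (0, 0)).2

def cascadeWt (C : Cascade) : ℤ := (-1) ^ (cascadeCrossings C).card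

def traceSwaps (s : List (ℕ × ℕ)) (p : ℕ) : ℕ :=
  s.foldl (fun p ab => if p = ab.1 then ab.2 else if p = ab.2 then ab.1 else p) p

/-- The path starting in column x: its position after i swaps. -/
def cascadePath (C : Cascade) (x i : ℕ) : ℕ := traceSwaps (C.swaps.take i) x

def onesPositions (r : List Bool) : List ℕ :=
  (List.range r.length).filter fun j => r.getD j false

/-- The permutation π_C associated to a cascade, as a function on {0,…,k−1}. -/
def cascadePerm (C : Cascade) (j : ℕ) : ℕ :=
  (onesPositions (cascadeBot C)).idxOf
    (traceSwaps C.swaps ((onesPositions C.top).getD j 0))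

/-- Sign of a function on {0,…,k−1} via inversion count. -/
def signOf (f : ℕ → ℕ) (k : ℕ) : ℤ :=
  (-1) ^ ((Finset.range k ×ˢ Finset.range k).filter fun p =>
      p.1 < p.2 ∧ f p.2 < f p.1).card

/-- Crossings of the two paths starting in columns x and y. -/
def pathCrossings (C : Cascade) (x y : ℕ) : Finset (ℕ × ℕ) :=
  (Finset.range C.swaps.length ×ˢ Finset.range C.top.length).filter fun ij =>
    cascadePath C x ij.1 = ij.2 ∧ cascadePath C x ij.1 < cascadePath C y ij.1 ∧
    cascadePath C y (ij.1 + 1) < cascadePath C x (ij.1 + 1)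

def rimRows (s : Finset (ℕ × ℕ)) : ℕ := (s.image Prod.fst).card

/-- A rim hook tableau, as the chain of successive shapes λ¹ ⊃ … ⊃ λ^{m+1} = ∅. -/
def IsRHT (T : List (Multiset ℕ)) : Prop :=
  2 ≤ T.length ∧ (∀ P ∈ T, ∀ p ∈ P, 0 < p) ∧ T.getLast? = some 0 ∧
  ∀ i, i + 1 < T.length →
    cells (T.getD (i + 1) 0) ⊆ cells (T.getD i 0) ∧
    IsRimHook (cells (T.getD i 0) \ cells (T.getD (i + 1) 0))

def tabShape (T : List (Multiset ℕ)) : Multiset ℕ := T.headI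

def tabContent (T : List (Multiset ℕ)) : List ℕ :=
  (List.range (T.length - 1)).map fun i =>
    (cells (T.getD i 0) \ cells (T.getD (i + 1) 0)).card

def tabWt (T : List (Multiset ℕ)) : ℤ :=
  ∏ i ∈ Finset.range (T.length - 1),
    (-1 : ℤ) ^ (rimRows (cells (T.getD i 0) \ cells (T.getD (i + 1) 0)) - 1)

/-- Θ : cascades → rim hook tableaux, via the shapes of the successive rows. -/
def theta (C : Cascade) : List (Multiset ℕ) :=
  (List.range (C.swaps.length + 1)).map fun i => shapeOf (cascadeRow C i)

/-- The block column permutation: j = i + d·k with i < d goes to σ(i) + d·k. -/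
def gammaMap (d : ℕ) (σ : Equiv.Perm (Fin d)) (j : ℕ) : ℕ :=
  if h : 0 < d then d * (j / d) + (σ ⟨j % d, Nat.mod_lt j h⟩ : ℕ) else j

def permuteCols (d : ℕ) (σ : Equiv.Perm (Fin d)) (r : List Bool) : List Bool :=
  (List.range r.length).map fun j => r.getD (gammaMap d σ⁻¹ j) false

/-- The action of σ ∈ S_d on a cascade: permute columns within blocks of size d. -/
def actC (d : ℕ) (σ : Equiv.Perm (Fin d)) (C : Cascade) : Cascade :=
  ⟨permuteCols d σ C.top, C.swaps.map fun ab => (gammaMap d σ ab.1, gammaMap d σ ab.2)⟩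

/-!
On the abacus with `d` runners, removing a rim hook of length `d * k` from a beta-set moves one
bead `k` places along its runner. Hence the Murnaghan–Nakayama recursion at a cycle type `d • L`
splits over the runners: up to a sign depending only on the beta-set, its value is the sum, over
all colourings of the parts of `L` by the `d` runners, of the product over the runners of the
value on each runner at the parts of its colour. A move changes the sign by the parity of the
beads it jumps over; those lying on other runners are accounted for by the parity of the number
of pairs of beads that are ordered differently by position and by runner.

Every runner of the beta-set of `𝝀` is the beta-set of `λ`, and `𝝁 = d • μ'` where `μ'` repeats
each part of `μ` `d` times. So `χ_𝝀(𝝁)` is, up to sign, a sum over colourings of products of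
values of `χ_λ`, invariant under permuting the colours. A colouring missing a colour contributes
`0`, since `χ_λ` vanishes on the empty cycle type, and `S_d` acts freely on the remaining
colourings, so the sum is divisible by `d!`.
-/

open Finset

theorem card_group_dvd_sum_of_invariant {G α : Type*} [Group G] [Fintype G] [MulAction G α]
    [Fintype α] (T : α → ℤ) (hT : ∀ (g : G) x, T (g • x) = T x)
    (hfree : ∀ x, T x ≠ 0 → MulAction.stabilizer G x = ⊥) :
    (Fintype.card G : ℤ) ∣ ∑ x, T x := by
  classical
  rw [← (MulAction.selfEquivSigmaOrbits G α).symm.sum_comp, Fintype.sum_sigma]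
  refine dvd_sum fun ω _ => ?_
  set x := ω.out
  have hconst : ∀ y : MulAction.orbit G x,
      T ((MulAction.selfEquivSigmaOrbits G α).symm ⟨ω, y⟩) = T x := by
    rintro ⟨_, g, rfl⟩
    exact hT g x
  rw [Fintype.sum_congr _ _ hconst, sum_const, card_univ, nsmul_eq_mul]
  by_cases hx : T x = 0
  · simp [hx]
  · have hcard := MulAction.card_orbit_mul_card_stabilizer_eq_card_group G x
    simp only [← Nat.card_eq_fintype_card, (Subgroup.eq_bot_iff_card _).mp (hfree x hx),
      mul_one] at hcard
    rw [← Nat.card_eq_fintype_card, ← Nat.card_eq_fintype_card, hcard]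
    exact dvd_mul_right _ _

section MulAddFin

variable {d u v l : ℕ} {r r' : Fin d}

theorem mul_add_mod_fin (u : ℕ) (r : Fin d) : (d * u + r) % d = r := by
  simp [Nat.mod_eq_of_lt r.isLt]

theorem mul_add_div_fin (u : ℕ) (r : Fin d) : (d * u + r) / d = u := by
  simp [Nat.mul_add_div r.pos, Nat.div_eq_of_lt r.isLt]

theorem mul_add_fin_inj : d * u + r = d * v + r' ↔ u = v ∧ r = r' := by
  refine ⟨fun h => ⟨?_, Fin.ext ?_⟩, fun ⟨hu, hr⟩ => hu ▸ hr ▸ rfl⟩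
  · simpa only [mul_add_div_fin] using congrArg (· / d) h
  · simpa only [mul_add_mod_fin] using congrArg (· % d) h

theorem exists_eq_mul_add_fin (hd : 0 < d) (t : ℕ) : ∃ (q : ℕ) (r : Fin d), t = d * q + r :=
  ⟨t / d, ⟨t % d, Nat.mod_lt t hd⟩, (Nat.div_add_mod t d).symm⟩

theorem mul_le_mul_add_iff : d * v ≤ d * u + r ↔ v ≤ u := by
  refine ⟨fun h => ?_, fun h => (Nat.mul_le_mul_left d h).trans (Nat.le_add_right _ _)⟩
  simpa [mul_add_div_fin, r.pos] using Nat.div_le_div_right (c := d) h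

theorem mul_add_lt_mul_iff : d * u + r < d * l ↔ u < l := by
  rw [← not_le, mul_le_mul_add_iff, not_le]

theorem mul_add_sub_mul (hvu : v ≤ u) : d * u + r - d * v = d * (u - v) + r := by
  have := Nat.mul_le_mul_left d hvu
  rw [Nat.mul_sub]
  omega

end MulAddFin

/-- The `r`-th runner of the `d`-abacus of a beta-set, i.e. the beta-set of its `r`-th
`d`-quotient. -/
def betaQuot {d : ℕ} (S : Finset ℕ) (r : Fin d) : Finset ℕ :=
  (S.filter (· % d = r)).image (· / d)

theorem injOn_div_filter_mod_eq (d m : ℕ) (S : Finset ℕ) :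
    Set.InjOn (· / d) (S.filter (· % d = m)) := fun a ha b hb hab => by
  rw [← Nat.div_add_mod a d, ← Nat.div_add_mod b d, (mem_filter.mp ha).2, (mem_filter.mp hb).2]
  exact congrArg (d * · + m) hab

section BetaQuot

variable {d l : ℕ} {S : Finset ℕ} {r : Fin d} {q : ℕ}

theorem mem_betaQuot : q ∈ betaQuot S r ↔ d * q + r ∈ S := by
  simp only [betaQuot, mem_image, mem_filter]
  constructor
  · rintro ⟨s, ⟨hs, hr⟩, rfl⟩
    rwa [← hr, Nat.div_add_mod]
  · exact fun h => ⟨_, ⟨h, mul_add_mod_fin q r⟩, mul_add_div_fin q r⟩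

theorem card_betaQuot : #(betaQuot S r) = #(S.filter (· % d = r)) :=
  card_image_of_injOn (injOn_div_filter_mod_eq d r S)

theorem betaQuot_filter (p : ℕ → Prop) [DecidablePred p] :
    betaQuot (S.filter p) r = (betaQuot S r).filter (fun u => p (d * u + r)) := by
  ext u
  simp only [mem_filter, mem_betaQuot]

theorem sum_eq_sum_betaQuot {M : Type*} [AddCommMonoid M] (hd : 0 < d) (S : Finset ℕ)
    (F : ℕ → M) : ∑ s ∈ S, F s = ∑ r : Fin d, ∑ u ∈ betaQuot S r, F (d * u + r) := by
  rw [← sum_fiberwise_of_maps_to (g := fun s => (⟨s % d, Nat.mod_lt s hd⟩ : Fin d))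
    (t := univ) (fun _ _ => mem_univ _)]
  refine sum_congr rfl fun r _ => ?_
  rw [betaQuot, sum_image (injOn_div_filter_mod_eq d r S)]
  refine sum_congr (filter_congr fun s _ => Fin.ext_iff) fun s hs => ?_
  rw [← (mem_filter.mp hs).2, Nat.div_add_mod]

theorem card_eq_sum_card_betaQuot (hd : 0 < d) (S : Finset ℕ) :
    #S = ∑ r : Fin d, #(betaQuot S r) := by
  simp only [card_eq_sum_ones]
  exact sum_eq_sum_betaQuot hd S _

theorem eq_range_iff_betaQuot_eq_range (hd : 0 < d) :
    S = range (d * l) ↔ ∀ r : Fin d, betaQuot S r = range l := by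
  constructor
  · rintro rfl r
    ext v
    rw [mem_betaQuot, mem_range, mem_range, mul_add_lt_mul_iff]
  · intro h
    ext t
    obtain ⟨q, r, rfl⟩ := exists_eq_mul_add_fin hd t
    rw [← mem_betaQuot, h r, mem_range, mem_range, mul_add_lt_mul_iff]

end BetaQuot

def moveBead (S : Finset ℕ) (s k : ℕ) : Finset ℕ := insert (s - k) (S.erase s)

theorem MNchar_nil (S : Finset ℕ) : MNchar S [] = if S = range #S then 1 else 0 := rfl

theorem MNchar_cons (S : Finset ℕ) (k : ℕ) (L : List ℕ) :
    MNchar S (k :: L) = ∑ s ∈ S.filter (fun s => k ≤ s ∧ s - k ∉ S),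
      (-1) ^ #(S.filter fun t => s - k < t ∧ t < s) * MNchar (moveBead S s k) L := rfl

theorem card_moveBead {S : Finset ℕ} {s k : ℕ} (hs : s ∈ S) (hsk : s - k ∉ S) :
    #(moveBead S s k) = #S := by
  rw [moveBead, card_insert_of_notMem fun h => hsk (mem_of_mem_erase h), card_erase_add_one hs]

section MoveBead

variable {d : ℕ} {S : Finset ℕ} {r : Fin d} {u k : ℕ}

theorem betaQuot_moveBead (hku : k ≤ u) :
    betaQuot (moveBead S (d * u + r) (d * k)) =
      Function.update (betaQuot S) r (moveBead (betaQuot S r) u k) := by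
  funext r'
  ext v
  rcases eq_or_ne r' r with rfl | hr
  · simp only [Function.update_self, moveBead, mem_insert, mem_erase, mem_betaQuot,
      mul_add_sub_mul hku, ne_eq, mul_add_fin_inj, and_true]
  · simp only [Function.update_of_ne hr, moveBead, mem_insert, mem_erase, mem_betaQuot,
      mul_add_sub_mul hku, mul_add_fin_inj, hr, and_false, false_or, ne_eq, not_false_eq_true,
      true_and]

theorem mul_add_movable_iff :
    (d * k ≤ d * u + r ∧ d * u + r - d * k ∉ S) ↔ (k ≤ u ∧ u - k ∉ betaQuot S r) := by
  rw [mul_le_mul_add_iff]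
  refine and_congr_right fun hku => ?_
  rw [mul_add_sub_mul hku, mem_betaQuot]

theorem card_filter_between_mod_eq (hku : k ≤ u) :
    #(S.filter fun t => (d * u + r - d * k < t ∧ t < d * u + r) ∧ t % d = r) =
      #((betaQuot S r).filter fun v => u - k < v ∧ v < u) := by
  rw [← filter_filter, ← card_betaQuot, betaQuot_filter, mul_add_sub_mul hku]
  congr 1
  refine filter_congr fun v _ => ?_
  simp only [add_lt_add_iff_right, Nat.mul_lt_mul_left r.pos]

end MoveBead

/-- `(-1) ^ residueInversions d S` is the sign of the permutation of `S` that lists the beads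
runner by runner. -/
def residueInversions (d : ℕ) (S : Finset ℕ) : ℕ :=
  #((S ×ˢ S).filter fun p => p.1 < p.2 ∧ p.2 % d < p.1 % d)

theorem residueInversions_insert {d x : ℕ} {T : Finset ℕ} (hx : x ∉ T) :
    residueInversions d (insert x T) = residueInversions d T +
      ∑ t ∈ T, ((if t < x ∧ x % d < t % d then 1 else 0) +
        if x < t ∧ t % d < x % d then 1 else 0) := by
  simp only [residueInversions, card_filter, sum_product, sum_insert hx, lt_irrefl, false_and,
    if_false, zero_add, sum_add_distrib]
  ring

theorem residueInversions_add_moveBead_modEq {d s k : ℕ} {S : Finset ℕ} (hs : s ∈ S)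
    (hsk : s - k ∉ S) (hmod : (s - k) % d = s % d) :
    residueInversions d S + residueInversions d (moveBead S s k) ≡
      #(S.filter fun t => s - k < t ∧ t < s) +
        #(S.filter fun t => (s - k < t ∧ t < s) ∧ t % d = s % d) [MOD 2] := by
  obtain ⟨T, hsT, rfl⟩ : ∃ T, s ∉ T ∧ S = insert s T :=
    ⟨S.erase s, notMem_erase s S, (insert_erase hs).symm⟩
  have hskT : s - k ∉ T := fun h => hsk (mem_insert_of_mem h)
  rw [← ZMod.natCast_eq_natCast_iff, moveBead, erase_insert hsT,
    residueInversions_insert hsT, residueInversions_insert hskT, hmod]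
  simp only [card_filter, sum_insert hsT, lt_irrefl, and_false, false_and, if_false, zero_add]
  push_cast
  -- only beads strictly between `s - k` and `s` change their order relative to the moved bead
  have hpointwise : ∀ t ∈ T,
      ((if t < s ∧ s % d < t % d then 1 else 0) + (if s < t ∧ t % d < s % d then 1 else 0) +
        ((if t < s - k ∧ s % d < t % d then 1 else 0) +
          if s - k < t ∧ t % d < s % d then 1 else 0) : ZMod 2) =
      (if s - k < t ∧ t < s then 1 else 0) +
        if (s - k < t ∧ t < s) ∧ t % d = s % d then 1 else 0 := by
    intro t ht
    have : t ≠ s := fun h => hsT (h ▸ ht)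
    have : t ≠ s - k := fun h => hskT (h ▸ ht)
    split_ifs <;> first | omega | decide
  have hsum := sum_congr rfl hpointwise
  simp only [sum_add_distrib] at hsum ⊢
  linear_combination hsum + CharTwo.add_self_eq_zero (residueInversions d T : ZMod 2)

def coloredEntries {α β : Type*} [DecidableEq α] (r : α) : List α → List β → List β
  | a :: as, k :: ks => if a = r then k :: coloredEntries r as ks else coloredEntries r as ks
  | _, _ => []

section ColoredEntries

variable {α β γ : Type*} [DecidableEq α] [DecidableEq γ]

@[simp]
theorem coloredEntries_cons_cons (r a : α) (as : List α) (k : β) (ks : List β) :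
    coloredEntries r (a :: as) (k :: ks) =
      if a = r then k :: coloredEntries r as ks else coloredEntries r as ks := rfl

theorem coloredEntries_map_equiv (e : α ≃ γ) (r : γ) (as : List α) (ks : List β) :
    coloredEntries r (as.map e) ks = coloredEntries (e.symm r) as ks := by
  induction as generalizing ks with
  | nil => rfl
  | cons a as ih =>
    cases ks with
    | nil => rfl
    | cons k ks => simp [← Equiv.eq_symm_apply, ih]

theorem coloredEntries_eq_nil_of_notMem {r : α} {as : List α} (h : r ∉ as) (ks : List β) :
    coloredEntries r as ks = [] := by
  induction as generalizing ks with
  | nil => rfl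
  | cons a as ih =>
    cases ks with
    | nil => rfl
    | cons k ks =>
      rw [List.mem_cons, not_or] at h
      simp [Ne.symm h.1, ih h.2]

end ColoredEntries

def quotientCharSum {d : ℕ} (Q : Fin d → Finset ℕ) (L : List ℕ) : ℤ :=
  ∑ c : Fin L.length → Fin d, ∏ r, MNchar (Q r) (coloredEntries r (List.ofFn c) L)

section QuotientCharSum

variable {d : ℕ}

theorem quotientCharSum_nil (Q : Fin d → Finset ℕ) :
    quotientCharSum Q [] = ∏ r, MNchar (Q r) [] := by
  simp [quotientCharSum, coloredEntries]

theorem prod_MNchar_coloredEntries_cons (Q : Fin d → Finset ℕ) (a : Fin d) (cs : List (Fin d))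
    (k : ℕ) (L : List ℕ) :
    ∏ r, MNchar (Q r) (coloredEntries r (a :: cs) (k :: L)) =
      ∑ u ∈ (Q a).filter (fun u => k ≤ u ∧ u - k ∉ Q a),
        (-1) ^ #((Q a).filter fun t => u - k < t ∧ t < u) *
          ∏ r, MNchar (Function.update Q a (moveBead (Q a) u k) r) (coloredEntries r cs L) := by
  have hne : ∀ r ∈ ({a}ᶜ : Finset (Fin d)), a ≠ r := fun r hr =>
    Ne.symm (by simpa using hr)
  rw [Fintype.prod_eq_mul_prod_compl a]
  simp only [coloredEntries_cons_cons, ↓reduceIte, MNchar_cons, sum_mul]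
  refine sum_congr rfl fun u _ => ?_
  rw [Fintype.prod_eq_mul_prod_compl a, Function.update_self, mul_assoc]
  congr 2
  exact prod_congr rfl fun r hr => by rw [if_neg (hne r hr), Function.update_of_ne (hne r hr).symm]

theorem quotientCharSum_cons (Q : Fin d → Finset ℕ) (k : ℕ) (L : List ℕ) :
    quotientCharSum Q (k :: L) = ∑ r, ∑ u ∈ (Q r).filter (fun u => k ≤ u ∧ u - k ∉ Q r),
      (-1) ^ #((Q r).filter fun t => u - k < t ∧ t < u) *
        quotientCharSum (Function.update Q r (moveBead (Q r) u k)) L := by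
  change ∑ c : Fin (L.length + 1) → Fin d, _ = _
  rw [← (Fin.consEquiv fun _ => Fin d).sum_comp, Fintype.sum_prod_type]
  refine sum_congr rfl fun r _ => ?_
  simp only [Fin.consEquiv_apply, List.ofFn_succ, Fin.cons_zero, Fin.cons_succ,
    prod_MNchar_coloredEntries_cons, quotientCharSum, mul_sum]
  exact sum_comm

theorem factorial_dvd_quotientCharSum_const (B : Finset ℕ) (hB : MNchar B [] = 0)
    (L : List ℕ) : (d.factorial : ℤ) ∣ quotientCharSum (fun _ : Fin d => B) L := by
  set T : (Fin L.length → Fin d) → ℤ :=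
    fun c => ∏ r, MNchar B (coloredEntries r (List.ofFn c) L)
  have hT : ∀ (σ : Equiv.Perm (Fin d)) c, T (σ • c) = T c := by
    intro σ c
    have hσ : List.ofFn (σ • c) = (List.ofFn c).map σ := by
      rw [List.map_ofFn]
      rfl
    simp only [T, hσ, coloredEntries_map_equiv]
    exact Equiv.prod_comp σ.symm (fun r => MNchar B (coloredEntries r (List.ofFn c) L))
  have hfree : ∀ c, T c ≠ 0 → MulAction.stabilizer (Equiv.Perm (Fin d)) c = ⊥ := by
    intro c hc
    have hsurj : Function.Surjective c := by
      intro r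
      by_contra h
      refine hc (prod_eq_zero (mem_univ r) ?_)
      rw [coloredEntries_eq_nil_of_notMem (by simpa [List.mem_ofFn] using h), hB]
    rw [Subgroup.eq_bot_iff_forall]
    intro σ hσ
    refine Equiv.ext fun x => ?_
    obtain ⟨i, rfl⟩ := hsurj x
    exact congrFun hσ i
  have hdvd := card_group_dvd_sum_of_invariant T hT hfree
  rwa [Fintype.card_perm, Fintype.card_fin] at hdvd

end QuotientCharSum

section Balanced

variable {d l : ℕ} {S : Finset ℕ}

theorem MNchar_nil_eq_sign_mul_prod (hd : 0 < d) (hbal : ∀ r : Fin d, #(betaQuot S r) = l) :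
    MNchar S [] = (-1) ^ (residueInversions d S + residueInversions d (range #S)) *
      ∏ r : Fin d, MNchar (betaQuot S r) [] := by
  have hcard : #S = d * l := by
    rw [card_eq_sum_card_betaQuot hd, sum_congr rfl fun r _ => hbal r]
    simp
  simp only [MNchar_nil, hbal, hcard]
  by_cases h : ∀ r : Fin d, betaQuot S r = range l
  · obtain rfl := (eq_range_iff_betaQuot_eq_range hd).mpr h
    simp only [h, if_true, prod_const_one, mul_one]
    exact (Even.add_self _).neg_one_pow.symm
  · obtain ⟨r, hr⟩ := not_forall.mp h
    rw [if_neg (mt (eq_range_iff_betaQuot_eq_range hd).mp h),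
      prod_eq_zero (mem_univ r) (if_neg hr), mul_zero]

theorem MNchar_map_mul (hd : 0 < d) (L : List ℕ) (hbal : ∀ r : Fin d, #(betaQuot S r) = l) :
    MNchar S (L.map (d * ·)) =
      (-1) ^ (residueInversions d S + residueInversions d (range #S)) *
        quotientCharSum (betaQuot (d := d) S) L := by
  induction L generalizing S with
  | nil => rw [List.map_nil, MNchar_nil_eq_sign_mul_prod hd hbal, quotientCharSum_nil]
  | cons k L ih =>
    rw [List.map_cons, MNchar_cons, sum_eq_sum_betaQuot hd, quotientCharSum_cons, mul_sum]
    refine sum_congr rfl fun r _ => ?_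
    rw [betaQuot_filter, filter_congr fun u _ => mul_add_movable_iff, mul_sum]
    refine sum_congr rfl fun u hu => ?_
    obtain ⟨hu, hku, hnot⟩ := by simpa only [mem_filter] using hu
    have hs : d * u + r ∈ S := mem_betaQuot.mp hu
    have hsk : d * u + r - d * k ∉ S := by rwa [mul_add_sub_mul hku, ← mem_betaQuot]
    have hbal' : ∀ r' : Fin d, #(betaQuot (moveBead S (d * u + r) (d * k)) r') = l := by
      intro r'
      rw [betaQuot_moveBead hku, Function.update_apply]
      split_ifs
      · rw [card_moveBead hu hnot, hbal]
      · exact hbal r'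
    have hsign := residueInversions_add_moveBead_modEq hs hsk
      (by rw [mul_add_sub_mul hku, mul_add_mod_fin, mul_add_mod_fin])
    rw [mul_add_mod_fin, card_filter_between_mod_eq hku] at hsign
    rw [ih hbal', card_moveBead hs hsk, betaQuot_moveBead hku, ← mul_assoc, ← mul_assoc,
      ← pow_add, ← pow_add]
    congr 1
    refine neg_one_pow_congr ?_
    simp only [Nat.even_iff]
    unfold Nat.ModEq at hsign
    omega

end Balanced

theorem List.getD_flatMap_replicate {α : Type*} {d : ℕ} (hd : 0 < d) (l : List α) (j : ℕ)
    (x : α) : (l.flatMap (replicate d)).getD j x = l.getD (j / d) x := by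
  induction l generalizing j with
  | nil => simp
  | cons a l ih =>
    rw [flatMap_cons]
    rcases lt_or_ge j d with hj | hj
    · rw [getD_append _ _ _ _ (by simpa using hj), getD_replicate a hj, Nat.div_eq_of_lt hj,
        getD_cons_zero]
    · obtain ⟨j, rfl⟩ := Nat.exists_eq_add_of_le' hj
      rw [getD_append_right _ _ _ _ (by simp), length_replicate, Nat.add_sub_cancel, ih,
        Nat.add_div_right _ hd, getD_cons_succ]

theorem sort_dilate (d : ℕ) (P : Multiset ℕ) :
    (dilate d P).sort (· ≤ ·) = ((P.sort (· ≤ ·)).flatMap (List.replicate d)).map (d * ·) := by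
  have hcoe : dilate d P = ↑(((P.sort (· ≤ ·)).flatMap (List.replicate d)).map (d * ·)) := by
    conv_lhs => rw [dilate, ← Multiset.sort_eq P (· ≤ ·)]
    simp only [← Multiset.coe_replicate, Multiset.coe_bind, List.map_flatMap, List.map_replicate]
  rw [hcoe, Multiset.coe_sort, List.mergeSort_eq_self]
  refine List.Pairwise.map _ (fun a b hab => Nat.mul_le_mul_left d hab) ?_
  exact List.pairwise_flatMap.mpr ⟨fun a _ => List.pairwise_replicate_of_refl,
    (Multiset.pairwise_sort P _).imp fun hab x hx y hy => by
      rw [List.eq_of_mem_replicate hx, List.eq_of_mem_replicate hy]; exact hab⟩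

theorem length_sort_dilate (d : ℕ) (P : Multiset ℕ) :
    ((dilate d P).sort (· ≤ ·)).length = d * (P.sort (· ≤ ·)).length := by
  simp [sort_dilate, mul_comm]

theorem getD_sort_dilate {d : ℕ} (hd : 0 < d) (P : Multiset ℕ) (j : ℕ) :
    ((dilate d P).sort (· ≤ ·)).getD j 0 = d * (P.sort (· ≤ ·)).getD (j / d) 0 := by
  have h := List.getD_map ((P.sort (· ≤ ·)).flatMap (List.replicate d)) 0 (n := j) (d * ·)
  simp only [mul_zero] at h
  rw [sort_dilate, h, List.getD_flatMap_replicate hd]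

theorem mem_betaSet {P : Multiset ℕ} {x : ℕ} :
    x ∈ betaSet P ↔ ∃ i < (P.sort (· ≤ ·)).length, (P.sort (· ≤ ·)).getD i 0 + i = x := by
  simp [betaSet]

theorem betaQuot_betaSet_dilate {d : ℕ} (P : Multiset ℕ) (r : Fin d) :
    betaQuot (betaSet (dilate d P)) r = betaSet P := by
  have hd := r.pos
  ext q
  simp only [mem_betaQuot, mem_betaSet, getD_sort_dilate hd, length_sort_dilate]
  constructor
  · rintro ⟨j, hj, hjq⟩
    obtain ⟨i, r', rfl⟩ := exists_eq_mul_add_fin hd j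
    rw [mul_add_div_fin, mul_add_lt_mul_iff] at *
    obtain ⟨rfl, -⟩ := mul_add_fin_inj.mp
      (show d * ((P.sort (· ≤ ·)).getD i 0 + i) + r' = d * q + r by rw [← hjq]; ring)
    exact ⟨i, hj, rfl⟩
  · rintro ⟨i, hi, rfl⟩
    refine ⟨d * i + r, mul_add_lt_mul_iff.mpr hi, ?_⟩
    rw [mul_add_div_fin]
    ring

theorem MNchar_betaSet_nil_eq_zero {P : Multiset ℕ} (hpos : ∀ p ∈ P, 0 < p) (hne : P ≠ 0) :
    MNchar (betaSet P) [] = 0 := by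
  have hlen : 0 < (P.sort (· ≤ ·)).length := by simpa [Multiset.card_pos] using hne
  have hzero : 0 ∉ betaSet P := by
    simp only [mem_betaSet, not_exists, not_and]
    intro i hi h
    obtain rfl : i = 0 := by omega
    have hmem : (P.sort (· ≤ ·)).getD 0 0 ∈ P.sort (· ≤ ·) := by
      rw [List.getD_eq_getElem _ _ hlen]
      exact List.getElem_mem hlen
    have := hpos _ ((Multiset.mem_sort _).mp hmem)
    omega
  rw [MNchar_nil, if_neg]
  intro h
  rw [h, mem_range, not_lt, Nat.le_zero, card_eq_zero] at hzero
  exact ne_empty_of_mem (mem_betaSet.mpr ⟨0, hlen, rfl⟩) hzero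

theorem chi_dilate_dilate_dvd_general (d n : ℕ) (hn : 0 < n)
    (lam mu : Multiset ℕ) (hlam : IsPartitionOf n lam) :
    (d.factorial : ℤ) ∣ chi (dilate d lam) (dilate d mu) := by
  obtain rfl | hd := Nat.eq_zero_or_pos d
  · simp
  have hlam0 : lam ≠ 0 := by
    rintro rfl
    exact hn.ne (by simpa using hlam.2)
  have hquot : betaQuot (d := d) (betaSet (dilate d lam)) = fun _ => betaSet lam :=
    funext (betaQuot_betaSet_dilate lam)
  rw [chi, sort_dilate, MNchar_map_mul hd _ (l := #(betaSet lam)) (by simp [hquot]), hquot]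
  exact dvd_mul_of_dvd_right
    (factorial_dvd_quotientCharSum_const _ (MNchar_betaSet_nil_eq_zero hlam.1 hlam0) _) _

/-- Miller, Theorem 1, (1): for partitions λ, μ of a positive integer n,
the character value χ_𝝀(𝝁) at the d-fold dilated shapes is divisible by d!. -/
theorem chi_dilate_dilate_dvd (d n : ℕ) (hd : 0 < d) (hn : 0 < n)
    (lam mu : Multiset ℕ) (hlam : IsPartitionOf n lam) (hmu : IsPartitionOf n mu) :
    (d.factorial : ℤ) ∣ chi (dilate d lam) (dilate d mu) :=
  chi_dilate_dilate_dvd_general d n hn lam mu hlam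
end

section
/- In Comét's correspondence, if β′ is obtained from β by swapping a 0 in position a with a 1 in position b = a + k (a < b), then the number of rows occupied by the removed rim hook sh(β)∖sh(β′) equals the number of 1's in β lying in positions a through b inclusive. -/
def SwapAt (β β' : List Bool) (a k : ℕ) : Prop :=
  a + k < β.length ∧ β.getD a true = false ∧ β.getD (a + k) false = true ∧
  β' = (β.set a true).set (a + k) false

/-! For each `1` of a word, from left to right, count the `0`s to its left (`zeroCounts`):
these are the parts of its shape in weakly increasing order, so, read from the right, they are
the row lengths of its diagram. The swap leaves the counts of the `1`s outside positions
`a, …, a + k` unchanged, while inside the window it shifts the counts one place to the right and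
lowers them by one; by monotonicity each of the counts in the window strictly drops, so the
removed rim hook meets exactly as many rows as there are `1`s in the window. -/

theorem List.getD_le_of_pairwise_ge {d : ℕ} {D : List ℕ} (hD : (d :: D).Pairwise (· ≥ ·))
    (x : ℕ) : (d :: D).getD x 0 ≤ d := by
  cases x with
  | zero => simp
  | succ x =>
    rcases lt_or_ge x D.length with hx | hx
    · rw [List.getD_cons_succ, List.getD_eq_getElem _ _ hx]
      exact List.rel_of_pairwise_cons hD (List.getElem_mem hx)
    · rw [List.getD_cons_succ, List.getD_eq_default _ _ hx]
      exact Nat.zero_le d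

theorem List.lt_getD_iff_lt_countP {D : List ℕ} (hD : D.Pairwise (· ≥ ·)) {x y : ℕ} :
    y < D.getD x 0 ↔ x < D.countP (y < ·) := by
  induction D generalizing x with
  | nil => simp
  | cons d D ih =>
    by_cases hyd : y < d
    · cases x with
      | zero => simp [hyd]
      | succ x =>
        rw [List.getD_cons_succ, ih hD.of_cons, List.countP_cons]
        simp [hyd]
    · have hcount : (d :: D).countP (y < ·) = 0 := by
        refine List.countP_eq_zero.2 fun e he => ?_
        rcases List.mem_cons.1 he with rfl | he
        · simpa using hyd
        · have := List.rel_of_pairwise_cons hD he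
          simp only [decide_eq_true_eq]
          omega
      have := List.getD_le_of_pairwise_ge hD x
      rw [hcount]
      omega

theorem List.lt_length_of_lt_getD {D : List ℕ} {x y : ℕ} (h : y < D.getD x 0) : x < D.length := by
  by_contra hx
  rw [List.getD_eq_default _ _ (not_lt.1 hx)] at h
  exact Nat.not_lt_zero _ h

theorem mem_cells_iff_lt_countP (P : Multiset ℕ) (x y : ℕ) :
    (x, y) ∈ cells P ↔ x < P.countP (y < ·) := by
  set D := (P.sort (· ≤ ·)).reverse
  have hD : D.Pairwise (· ≥ ·) := List.pairwise_reverse.2 (Multiset.pairwise_sort _ _)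
  have hPD : (D : Multiset ℕ) = P := by rw [Multiset.coe_reverse, Multiset.sort_eq]
  rw [← hPD, Multiset.coe_countP, ← List.lt_getD_iff_lt_countP hD]
  simp only [cells, Finset.mem_filter, Finset.mem_product, Finset.mem_range, hPD]
  refine ⟨fun h => h.2, fun h => ⟨⟨?_, ?_⟩, h⟩⟩
  · have hx := List.lt_length_of_lt_getD h
    rwa [← hPD, Multiset.coe_card]
  · have hx := List.lt_length_of_lt_getD h
    have hmem : D.getD x 0 ∈ P := by
      rw [← hPD, Multiset.mem_coe, List.getD_eq_getElem _ _ hx]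
      exact List.getElem_mem hx
    have := Multiset.le_sup hmem
    omega

theorem List.card_filter_range_getD_lt {l l' : List ℕ} (h : l'.length = l.length) :
    ((Finset.range l.length).filter fun x => l'.getD x 0 < l.getD x 0).card =
      (l'.zip l).countP (fun p => p.1 < p.2) := by
  induction l generalizing l' with
  | nil => simp
  | cons d l ih =>
    obtain _ | ⟨d', l'⟩ := l'
    · simp at h
    rw [Finset.card_filter, List.length_cons, Finset.sum_range_succ', ← Finset.card_filter]
    simp only [List.getD_cons_succ, List.getD_cons_zero]
    rw [ih (by simpa using h), List.zip_cons_cons, List.countP_cons]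
    simp

theorem rimRows_cells_sdiff {P P' : Multiset ℕ} {D D' : List ℕ}
    (hP : ∀ x y, (x, y) ∈ cells P ↔ y < D.getD x 0)
    (hP' : ∀ x y, (x, y) ∈ cells P' ↔ y < D'.getD x 0) (hlen : D'.length = D.length) :
    rimRows (cells P \ cells P') = (D'.zip D).countP (fun p => p.1 < p.2) := by
  rw [rimRows, ← List.card_filter_range_getD_lt hlen]
  congr 1
  ext x
  simp only [Finset.mem_image, Finset.mem_sdiff, Finset.mem_filter, Finset.mem_range,
    Prod.exists, exists_and_right, exists_eq_right, hP, hP', not_lt]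
  constructor
  · rintro ⟨y, hy, hy'⟩
    exact ⟨List.lt_length_of_lt_getD hy, by omega⟩
  · rintro ⟨-, hx⟩
    exact ⟨_, hx, le_rfl⟩

def zeroCounts (β : List Bool) : List ℕ :=
  ((List.range β.length).filter (β.getD · false)).map (zerosBefore β)

theorem zerosBefore_mono (β : List Bool) {i j : ℕ} (hij : i ≤ j) :
    zerosBefore β i ≤ zerosBefore β j :=
  (List.take_sublist_take_left hij).count_le _

theorem zerosBefore_append (u v : List Bool) (j : ℕ) :
    zerosBefore (u ++ v) j = zerosBefore u j + zerosBefore v (j - u.length) := by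
  simp only [zerosBefore, List.take_append, List.count_append]

theorem zeroCounts_pairwise (β : List Bool) : (zeroCounts β).Pairwise (· ≤ ·) :=
  (List.pairwise_lt_range.filter _).map _ fun _ _ h => zerosBefore_mono β h.le

theorem countP_shapeOf (β : List Bool) (y : ℕ) :
    (shapeOf β).countP (y < ·) = (zeroCounts β).countP (y < ·) := by
  rw [shapeOf, Multiset.coe_countP, List.countP_filterMap, zeroCounts, List.countP_map,
    List.countP_filter]
  refine List.countP_congr fun j _ => ?_
  generalize β.getD j false = b
  cases b
  · simp
  · by_cases hz : 0 < zerosBefore β j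
    · simp [hz]
    · simp [hz]; omega

theorem mem_cells_shapeOf (β : List Bool) (x y : ℕ) :
    (x, y) ∈ cells (shapeOf β) ↔ y < (zeroCounts β).reverse.getD x 0 := by
  rw [mem_cells_iff_lt_countP, countP_shapeOf,
    List.lt_getD_iff_lt_countP (List.pairwise_reverse.2 (zeroCounts_pairwise β)),
    List.countP_reverse]

theorem zeroCounts_append (u v : List Bool) :
    zeroCounts (u ++ v) = zeroCounts u ++ (zeroCounts v).map (· + u.count false) := by
  rw [zeroCounts, zeroCounts, zeroCounts, List.length_append, List.range_add, List.filter_append,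
    List.map_append, List.filter_map, List.map_map, List.map_map]
  congr 1
  · rw [List.filter_congr fun j hj => by rw [List.getD_append _ _ _ _ (List.mem_range.1 hj)]]
    refine List.map_congr_left fun j hj => ?_
    have hj := (List.mem_range.1 (List.mem_filter.1 hj).1).le
    rw [zerosBefore_append, Nat.sub_eq_zero_of_le hj]
    rfl
  · rw [List.filter_congr (q := (v.getD · false)) fun j _ => by
      simp only [Function.comp_apply, List.getD_append_right _ _ _ _ (Nat.le_add_right _ _),
        Nat.add_sub_cancel_left]]
    refine List.map_congr_left fun j _ => ?_
    simp only [Function.comp_apply, zerosBefore_append, Nat.add_sub_cancel_left]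
    rw [zerosBefore, List.take_of_length_le (Nat.le_add_right _ _), Nat.add_comm]

@[simp]
theorem zeroCounts_singleton_true : zeroCounts [true] = [0] := rfl

@[simp]
theorem zeroCounts_singleton_false : zeroCounts [false] = [] := rfl

theorem length_zeroCounts (β : List Bool) : (zeroCounts β).length = β.count true := by
  induction β with
  | nil => rfl
  | cons b β ih =>
    rw [← List.singleton_append, zeroCounts_append, List.length_append, List.length_map, ih,
      List.count_append]
    cases b <;> simp

theorem rimRows_cells_shapeOf_sdiff {β β' : List Bool} (h : β'.count true = β.count true) :
    rimRows (cells (shapeOf β) \ cells (shapeOf β')) =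
      ((zeroCounts β').zip (zeroCounts β)).countP (fun p => p.1 < p.2) := by
  have hlen : (zeroCounts β').length = (zeroCounts β).length := by
    rw [length_zeroCounts, length_zeroCounts, h]
  rw [rimRows_cells_sdiff (mem_cells_shapeOf β) (mem_cells_shapeOf β') (by simpa using hlen),
    List.zip_eq_zipWith, ← List.reverse_zipWith hlen, List.countP_reverse, List.zip_eq_zipWith]

theorem List.countP_zip_self_lt (l : List ℕ) : (l.zip l).countP (fun p => p.1 < p.2) = 0 := by
  induction l with
  | nil => rfl
  | cons d l ih => simp [ih]

theorem List.countP_zip_cons_map_succ {u c : ℕ} {P : List ℕ}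
    (h : (u :: (P ++ [c])).Pairwise (· ≤ ·)) :
    ((u :: P).zip ((P ++ [c]).map (· + 1))).countP (fun p => p.1 < p.2) = P.length + 1 := by
  induction P generalizing u with
  | nil => simpa [Nat.lt_succ_iff] using h
  | cons v P ih =>
    rw [List.cons_append, List.pairwise_cons] at h
    rw [List.cons_append, List.map_cons, List.zip_cons_cons, List.countP_cons, ih h.2]
    simp [Nat.lt_succ_iff.2 (h.1 v List.mem_cons_self)]

theorem countP_zip_zeroCounts_append_append {X B B' Z : List Bool}
    (hf : B'.count false = B.count false) (ht : B'.count true = B.count true) :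
    ((zeroCounts (X ++ B' ++ Z)).zip (zeroCounts (X ++ B ++ Z))).countP (fun p => p.1 < p.2) =
      ((zeroCounts B').zip (zeroCounts B)).countP (fun p => p.1 < p.2) := by
  simp only [zeroCounts_append, List.count_append, hf]
  rw [List.zip_append (by simp [length_zeroCounts, ht]), List.zip_append rfl,
    List.countP_append, List.countP_append, List.countP_zip_self_lt, List.countP_zip_self_lt,
    List.zip_map, List.countP_map]
  simp [Function.comp_def]

theorem countP_zip_zeroCounts_swap (Y : List Bool) :
    ((zeroCounts ([true] ++ Y ++ [false])).zip (zeroCounts ([false] ++ Y ++ [true]))).countP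
      (fun p => p.1 < p.2) = Y.count true + 1 := by
  have h' : zeroCounts ([true] ++ Y ++ [false]) = 0 :: zeroCounts Y := by
    rw [zeroCounts_append, zeroCounts_append]
    simp
  have h : zeroCounts ([false] ++ Y ++ [true]) = (zeroCounts Y ++ [Y.count false]).map (· + 1) := by
    rw [zeroCounts_append, zeroCounts_append]
    simp
  have hsorted : (0 :: (zeroCounts Y ++ [Y.count false])).Pairwise (· ≤ ·) := by
    have := zeroCounts_pairwise ([true] ++ Y ++ [true])
    rw [zeroCounts_append, zeroCounts_append] at this
    simpa using this
  rw [h, h', List.countP_zip_cons_map_succ hsorted, length_zeroCounts]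

theorem List.eq_take_append_cons_append_cons {α : Type*} {l : List α} {i j : ℕ} (hij : i < j)
    (hj : j < l.length) :
    l = l.take i ++ ([l[i]] ++ (l.drop (i + 1)).take (j - i - 1) ++ [l[j]]) ++ l.drop (j + 1) := by
  conv_lhs => rw [← List.take_append_drop i l, List.drop_eq_getElem_cons (by omega),
    ← List.take_append_drop (j - i - 1) (l.drop (i + 1)), List.drop_drop,
    show i + 1 + (j - i - 1) = j by omega, List.drop_eq_getElem_cons hj]
  simp

theorem List.set_set_append {α : Type*} (X Y Z : List α) (c d c' d' : α) :
    ((X ++ ([c] ++ Y ++ [d]) ++ Z).set X.length c').set (X.length + (Y.length + 1)) d' =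
      X ++ ([c'] ++ Y ++ [d']) ++ Z := by
  simp [List.set_append_right]

theorem SwapAt.eq_append {β β' : List Bool} {a k : ℕ} (h : SwapAt β β' a k) (hk : 0 < k) :
    ∃ X Y Z : List Bool, X.length = a ∧ Y.length + 1 = k ∧
      β = X ++ ([false] ++ Y ++ [true]) ++ Z ∧ β' = X ++ ([true] ++ Y ++ [false]) ++ Z := by
  obtain ⟨hlen, ha, hb, rfl⟩ := h
  have hsplit := List.eq_take_append_cons_append_cons (Nat.lt_add_of_pos_right hk) hlen
  rw [← List.getD_eq_getElem _ true, ha, ← List.getD_eq_getElem _ false, hb] at hsplit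
  have hX : (β.take a).length = a := by simp; omega
  have hY : ((β.drop (a + 1)).take (a + k - a - 1)).length + 1 = k := by simp; omega
  generalize β.take a = X, (β.drop (a + 1)).take (a + k - a - 1) = Y, β.drop (a + k + 1) = Z
    at hsplit hX hY
  subst hsplit hX hY
  exact ⟨X, Y, Z, rfl, rfl, rfl, List.set_set_append X Y Z _ _ _ _⟩

/-- Comét's lemma, second part: the number of rows occupied by the removed rim hook
sh(β) ∖ sh(β') equals the number of 1's of β in positions a through a + k inclusive. -/
theorem comet_rows (β β' : List Bool) (a k : ℕ) (hk : 0 < k) (h : SwapAt β β' a k) :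
    rimRows (cells (shapeOf β) \ cells (shapeOf β')) =
      ((β.drop a).take (k + 1)).count true := by
  obtain ⟨X, Y, Z, rfl, hY, rfl, rfl⟩ := h.eq_append hk
  rw [rimRows_cells_shapeOf_sdiff (by simp [List.count_append]; omega),
    countP_zip_zeroCounts_append_append (by simp) (by simp), countP_zip_zeroCounts_swap,
    List.append_assoc, List.drop_left' rfl, List.take_left' (by simp; omega)]
  simp
end

section
/- For any cascade C, the weight wt(C) = (−1)^{cr(C)} equals the sign of the associated permutation π_C. -/
/-! In row `i` a cascade moves the `1` at position `bᵢ` to the empty position `aᵢ < bᵢ`. On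
the positions of the `1`s this is the transposition `(aᵢ bᵢ)`, whose inversions are exactly
the pairs `(j, bᵢ)` with a `1` at `aᵢ < j < bᵢ`, i.e. the crossings of row `i`. The parity of
the number of inversions is multiplicative under composition, so `(-1)^cr(C)` is the sign of
the path map from the `1`s of the top row to those of the bottom row, which is `π_C` once the
`1`s of both rows are relabelled by their ranks. -/

open Finset

def ascPairs (S : Finset ℕ) : Finset (ℕ × ℕ) := (S ×ˢ S).filter fun p => p.1 < p.2

def inversions (S : Finset ℕ) (f : ℕ → ℕ) : Finset (ℕ × ℕ) :=
  (ascPairs S).filter fun p => f p.2 < f p.1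

lemma mem_ascPairs {S : Finset ℕ} {p : ℕ × ℕ} :
    p ∈ ascPairs S ↔ p.1 ∈ S ∧ p.2 ∈ S ∧ p.1 < p.2 := by
  simp [ascPairs, and_assoc]

lemma signOf_eq (f : ℕ → ℕ) (k : ℕ) :
    signOf f k = (-1) ^ (inversions (range k) f).card := by
  rw [signOf, inversions, ascPairs, filter_filter]

lemma neg_one_pow_card_inversions (S : Finset ℕ) (f : ℕ → ℕ) :
    (-1 : ℤ) ^ (inversions S f).card = ∏ p ∈ ascPairs S, if f p.2 < f p.1 then -1 else 1 := by
  rw [inversions, prod_ite, prod_const, prod_const_one, mul_one]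

def sortPairBy (σ : ℕ → ℕ) (p : ℕ × ℕ) : ℕ × ℕ :=
  (min (σ p.1) (σ p.2), max (σ p.1) (σ p.2))

lemma sortPairBy_mem_ascPairs (σ : Equiv.Perm ℕ) {S : Finset ℕ} {p : ℕ × ℕ}
    (hp : p ∈ ascPairs S) : sortPairBy σ p ∈ ascPairs (S.image σ) := by
  obtain ⟨h1, h2, h12⟩ := mem_ascPairs.1 hp
  rcases lt_or_gt_of_ne (σ.injective.ne h12.ne) with h | h <;>
    simp [sortPairBy, mem_ascPairs, h, h.le, h1, h2]

lemma sortPairBy_symm_sortPairBy (σ : Equiv.Perm ℕ) {p : ℕ × ℕ} (hp : p.1 < p.2) :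
    sortPairBy σ.symm (sortPairBy σ p) = p := by
  obtain ⟨x, y⟩ := p
  rcases le_total (σ x) (σ y) with h | h <;> simp [sortPairBy, h, hp.le]

lemma neg_one_pow_card_inversions_comp (S : Finset ℕ) (σ : Equiv.Perm ℕ) {f : ℕ → ℕ}
    (hf : Set.InjOn f (S.image σ)) :
    (-1 : ℤ) ^ (inversions S (f ∘ σ)).card =
      (-1) ^ (inversions S σ).card * (-1) ^ (inversions (S.image σ) f).card := by
  have hreindex : ∏ q ∈ ascPairs (S.image σ), (if f q.2 < f q.1 then (-1 : ℤ) else 1) =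
      ∏ p ∈ ascPairs S, if f (sortPairBy σ p).2 < f (sortPairBy σ p).1 then -1 else 1 := by
    refine (prod_nbij' (sortPairBy σ) (sortPairBy σ.symm)
      (fun p hp => sortPairBy_mem_ascPairs σ hp) (fun q hq => ?_)
      (fun p hp => sortPairBy_symm_sortPairBy σ (mem_ascPairs.1 hp).2.2)
      (fun q hq => by simpa using sortPairBy_symm_sortPairBy σ.symm (mem_ascPairs.1 hq).2.2)
      (fun _ _ => rfl)).symm
    simpa [image_image] using sortPairBy_mem_ascPairs σ.symm hq
  rw [neg_one_pow_card_inversions, neg_one_pow_card_inversions, neg_one_pow_card_inversions,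
    hreindex, ← prod_mul_distrib]
  refine prod_congr rfl fun p hp => ?_
  obtain ⟨h1, h2, h12⟩ := mem_ascPairs.1 hp
  have hne : f (σ p.1) ≠ f (σ p.2) := fun h =>
    h12.ne (σ.injective (hf (mem_image_of_mem σ h1) (mem_image_of_mem σ h2) h))
  -- a pair inverted by `σ` is inverted by `f ∘ σ` iff its sorted image is not inverted by `f`
  rcases lt_or_gt_of_ne (σ.injective.ne h12.ne) with h | h
  · simp [sortPairBy, h.le, h.not_gt]
  · simp only [sortPairBy, Function.comp_apply, min_eq_right h.le, max_eq_left h.le, if_pos h]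
    split_ifs <;> omega

lemma card_inversions_swap {S : Finset ℕ} {a b : ℕ} (hab : a < b) (ha : a ∉ S)
    (hb : b ∈ S) :
    (inversions S (Equiv.swap a b)).card = (S.filter fun x => a < x ∧ x < b).card := by
  have hinv : inversions S (Equiv.swap a b) = (S.filter fun x => a < x ∧ x < b) ×ˢ {b} := by
    ext ⟨x, y⟩
    simp only [inversions, mem_filter, mem_ascPairs, mem_product, mem_singleton]
    rw [Equiv.swap_apply_def, Equiv.swap_apply_def]
    grind
  rw [hinv, card_product, card_singleton, mul_one]

lemma inversions_comp_of_strictMonoOn {S : Finset ℕ} {U : Set ℕ} {f h : ℕ → ℕ}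
    (hh : StrictMonoOn h U) (hf : Set.MapsTo f S U) : inversions S (h ∘ f) = inversions S f :=
  filter_congr fun _ hp =>
    hh.lt_iff_lt (hf (mem_ascPairs.1 hp).2.1) (hf (mem_ascPairs.1 hp).1)

lemma card_inversions_comp_of_strictMonoOn {T : Finset ℕ} {g : ℕ → ℕ} (f : ℕ → ℕ)
    (hg : StrictMonoOn g T) : (inversions T (f ∘ g)).card = (inversions (T.image g) f).card := by
  refine card_nbij (Prod.map g g) (fun p hp => ?_) (fun p hp q hq hpq => ?_) (fun q hq => ?_)
  · obtain ⟨hp, hinv⟩ := mem_filter.1 hp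
    obtain ⟨h1, h2, h12⟩ := mem_ascPairs.1 hp
    exact mem_filter.2
      ⟨mem_ascPairs.2 ⟨mem_image_of_mem g h1, mem_image_of_mem g h2, hg h1 h2 h12⟩, hinv⟩
  · obtain ⟨hp1, hp2, -⟩ := mem_ascPairs.1 (mem_filter.1 hp).1
    obtain ⟨hq1, hq2, -⟩ := mem_ascPairs.1 (mem_filter.1 hq).1
    exact Prod.ext (hg.injOn hp1 hq1 (congrArg Prod.fst hpq))
      (hg.injOn hp2 hq2 (congrArg Prod.snd hpq))
  · obtain ⟨u, v⟩ := q
    obtain ⟨hq, hinv⟩ := mem_filter.1 hq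
    obtain ⟨h1, h2, h12⟩ := mem_ascPairs.1 hq
    obtain ⟨x, hx, rfl⟩ := mem_image.1 h1
    obtain ⟨y, hy, rfl⟩ := mem_image.1 h2
    refine ⟨(x, y), mem_filter.2 ⟨mem_ascPairs.2 ⟨hx, hy, ?_⟩, hinv⟩, rfl⟩
    exact (hg.lt_iff_lt hx hy).1 h12

namespace List

lemma image_getD_range {α : Type*} [DecidableEq α] (l : List α) (d : α) :
    (Finset.range l.length).image (l.getD · d) = l.toFinset := by
  ext x
  simp only [Finset.mem_image, Finset.mem_range, List.mem_toFinset, List.mem_iff_getElem]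
  exact ⟨fun ⟨i, hi, hx⟩ => ⟨i, hi, (List.getD_eq_getElem _ _ hi).symm.trans hx⟩,
    fun ⟨i, hi, hx⟩ => ⟨i, hi, (List.getD_eq_getElem _ _ hi).trans hx⟩⟩

variable {α : Type*} [Preorder α] {l : List α}

lemma SortedLT.strictMonoOn_getD (hl : l.SortedLT) (d : α) :
    StrictMonoOn (l.getD · d) (Set.Iio l.length) := fun i hi j hj hij => by
  simp only [List.getD_eq_getElem _ _ hi, List.getD_eq_getElem _ _ hj]
  exact hl.getElem_lt_getElem_of_lt hij

lemma SortedLT.strictMonoOn_idxOf [DecidableEq α] (hl : l.SortedLT) :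
    StrictMonoOn l.idxOf {x | x ∈ l} := fun u hu v hv huv =>
  Fin.lt_def.1 ((hl.getIso l).symm.lt_iff_lt (x := ⟨u, hu⟩) (y := ⟨v, hv⟩) |>.2 huv)

end List

def swapStep (r : List Bool) (ab : ℕ × ℕ) : List Bool := (r.set ab.1 true).set ab.2 false

lemma applySwaps_cons (r : List Bool) (ab : ℕ × ℕ) (s : List (ℕ × ℕ)) :
    applySwaps r (ab :: s) = applySwaps (swapStep r ab) s := rfl

lemma traceSwaps_cons (ab : ℕ × ℕ) (s : List (ℕ × ℕ)) :
    traceSwaps (ab :: s) = traceSwaps s ∘ Equiv.swap ab.1 ab.2 := by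
  funext p
  simp only [traceSwaps, List.foldl_cons, Function.comp_apply, Equiv.swap_apply_def]

lemma traceSwaps_injective (s : List (ℕ × ℕ)) : Function.Injective (traceSwaps s) := by
  induction s with
  | nil => exact Function.injective_id
  | cons ab s ih => rw [traceSwaps_cons]; exact ih.comp (Equiv.injective _)

def ValidSwaps : List Bool → List (ℕ × ℕ) → Prop
  | _, [] => True
  | r, ab :: s => ab.1 < ab.2 ∧ r.getD ab.1 true = false ∧ r.getD ab.2 false = true ∧
      ValidSwaps (swapStep r ab) s

def onesSet (r : List Bool) : Finset ℕ := (onesPositions r).toFinset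

lemma lt_length_of_getD_eq_true {r : List Bool} {x : ℕ} (h : r.getD x false = true) :
    x < r.length := by
  by_contra hx
  rw [List.getD_eq_default _ _ (not_lt.1 hx)] at h
  exact Bool.false_ne_true h

lemma mem_onesSet {r : List Bool} {x : ℕ} : x ∈ onesSet r ↔ r.getD x false = true := by
  simpa [onesSet, onesPositions] using lt_length_of_getD_eq_true

lemma sortedLT_onesPositions (r : List Bool) : (onesPositions r).SortedLT :=
  (List.pairwise_lt_range.filter _).sortedLT

lemma image_swap_onesSet {r : List Bool} {a b : ℕ} (ha : r.getD a true = false)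
    (hb : r.getD b false = true) :
    (onesSet r).image (Equiv.swap a b) = onesSet (swapStep r (a, b)) := by
  ext y
  rw [← Equiv.coe_toEmbedding, ← map_eq_image, mem_map_equiv, Equiv.symm_swap, mem_onesSet,
    mem_onesSet, swapStep]
  simp only [List.getD_eq_getElem?_getD, List.getElem?_set, List.length_set] at ha hb ⊢
  rw [Equiv.swap_apply_def]
  grind

lemma notMem_onesSet {r : List Bool} {a : ℕ} (ha : r.getD a true = false) : a ∉ onesSet r := by
  rw [mem_onesSet, List.getD_eq_getElem?_getD]
  rw [List.getD_eq_getElem?_getD] at ha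
  cases h : r[a]? <;> simp_all

lemma image_traceSwaps_onesSet {r : List Bool} {s : List (ℕ × ℕ)} (hs : ValidSwaps r s) :
    (onesSet r).image (traceSwaps s) = onesSet (applySwaps r s) := by
  induction s generalizing r with
  | nil => exact image_id
  | cons ab s ih =>
    obtain ⟨-, ha, hb, hs⟩ := hs
    rw [traceSwaps_cons, ← image_image, image_swap_onesSet ha hb, ih hs, applySwaps_cons]

lemma card_cascadeCrossings (r : List Bool) (s : List (ℕ × ℕ)) :
    (cascadeCrossings ⟨r, s⟩).card = ∑ i ∈ range s.length,
      ((range r.length).filter fun j => (applySwaps r (s.take i)).getD j false = true ∧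
        (s.getD i (0, 0)).1 < j ∧ j < (s.getD i (0, 0)).2).card := by
  rw [cascadeCrossings, card_filter, sum_product]
  exact sum_congr rfl fun i _ => (card_filter _ _).symm

lemma card_cascadeCrossings_cons (r : List Bool) (ab : ℕ × ℕ) (s : List (ℕ × ℕ)) :
    (cascadeCrossings ⟨r, ab :: s⟩).card =
      ((onesSet r).filter fun x => ab.1 < x ∧ x < ab.2).card +
        (cascadeCrossings ⟨swapStep r ab, s⟩).card := by
  have hlen : (swapStep r ab).length = r.length := by simp [swapStep]
  rw [card_cascadeCrossings, card_cascadeCrossings, List.length_cons, sum_range_succ', add_comm,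
    hlen]
  congr 2
  ext x
  simp only [mem_filter, mem_range, mem_onesSet, List.take_zero, applySwaps, List.foldl_nil,
    List.getD_cons_zero]
  exact ⟨fun h => h.2, fun h => ⟨lt_length_of_getD_eq_true h.1, h⟩⟩

lemma neg_one_pow_card_cascadeCrossings {r : List Bool} {s : List (ℕ × ℕ)}
    (hs : ValidSwaps r s) :
    (-1 : ℤ) ^ (cascadeCrossings ⟨r, s⟩).card =
      (-1) ^ (inversions (onesSet r) (traceSwaps s)).card := by
  induction s generalizing r with
  | nil =>
    have hempty : inversions (onesSet r) (traceSwaps []) = ∅ :=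
      filter_false_of_mem fun p hp => (mem_ascPairs.1 hp).2.2.not_gt
    simp [cascadeCrossings, hempty]
  | cons ab s ih =>
    obtain ⟨a, b⟩ := ab
    obtain ⟨hab, ha, hb, hs⟩ := hs
    rw [card_cascadeCrossings_cons, pow_add, ih hs, traceSwaps_cons,
      neg_one_pow_card_inversions_comp _ _ (traceSwaps_injective s).injOn,
      card_inversions_swap hab (notMem_onesSet ha) (mem_onesSet.2 hb),
      image_swap_onesSet ha hb]

lemma validSwaps_of_forall {r : List Bool} {s : List (ℕ × ℕ)}
    (h : ∀ i < s.length,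
      (s.getD i (0, 0)).1 < (s.getD i (0, 0)).2 ∧
      (applySwaps r (s.take i)).getD (s.getD i (0, 0)).1 true = false ∧
      (applySwaps r (s.take i)).getD (s.getD i (0, 0)).2 false = true) :
    ValidSwaps r s := by
  induction s generalizing r with
  | nil => trivial
  | cons ab s ih =>
    obtain ⟨hab, ha, hb⟩ := h 0 s.length.succ_pos
    refine ⟨hab, ha, hb, ih fun i hi => ?_⟩
    simpa only [List.getD_cons_succ, List.take_succ_cons, applySwaps_cons] using
      h (i + 1) (Nat.succ_lt_succ hi)

lemma Cascade.Valid.validSwaps {C : Cascade} (hC : C.Valid) : ValidSwaps C.top C.swaps :=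
  validSwaps_of_forall fun i hi => ⟨(hC.2.2.1 i hi).1, (hC.2.2.1 i hi).2.2⟩

/-- For any cascade C, wt(C) = sgn(π_C). -/
theorem wt_eq_sign (C : Cascade) (hC : C.Valid) :
    cascadeWt C = signOf (cascadePerm C) (onesPositions C.top).length := by
  obtain ⟨r, s⟩ := C
  have hs : ValidSwaps r s := hC.validSwaps
  set L := onesPositions r
  set M := onesPositions (applySwaps r s)
  have hperm : cascadePerm ⟨r, s⟩ = M.idxOf ∘ traceSwaps s ∘ (L.getD · 0) := rfl
  have hL : StrictMonoOn (L.getD · 0) (range L.length) := by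
    simpa using (sortedLT_onesPositions r).strictMonoOn_getD 0
  have himage : (range L.length).image (L.getD · 0) = onesSet r := List.image_getD_range L 0
  have hmaps : Set.MapsTo (traceSwaps s ∘ (L.getD · 0)) (range L.length) {x | x ∈ M} := by
    intro j hj
    have hj' := mem_image_of_mem (traceSwaps s) (himage ▸ mem_image_of_mem _ hj)
    rw [image_traceSwaps_onesSet hs] at hj'
    exact List.mem_toFinset.1 hj'
  rw [cascadeWt, signOf_eq, hperm,
    inversions_comp_of_strictMonoOn (sortedLT_onesPositions _).strictMonoOn_idxOf hmaps,
    card_inversions_comp_of_strictMonoOn _ hL, himage]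
  exact neg_one_pow_card_cascadeCrossings hs
end

section
/- With λ, 𝝀, α and the S_d-action on cascades 𝒞(𝝀, α) as above, the action is free: for every cascade C, σ·C = C implies σ = 1. -/
/-!
Every part of `𝝀` is at least `d`, so the top row of a cascade starts with `d` zeros, while
`𝝀` has at least `d` parts, so the bottom row `1ᵘ0ᵛ` starts with `d` ones. Every swap
`(a, b)` has `b - a ∈ α`, hence `b ≥ d`; so each column `j < d` is the `a`-position of some
swap, and a `σ` fixing the swaps of `C` must fix every `j < d`.
-/

theorem le_of_mem_dilate {d : ℕ} {P : Multiset ℕ} (hP : ∀ p ∈ P, 0 < p) {a : ℕ}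
    (ha : a ∈ dilate d P) : d ≤ a := by
  obtain ⟨p, hp, ha⟩ := Multiset.mem_bind.1 ha
  rw [Multiset.eq_of_mem_replicate ha]
  exact Nat.le_mul_of_pos_right d (hP p hp)

theorem card_dilate (d : ℕ) (P : Multiset ℕ) :
    Multiset.card (dilate d P) = d * Multiset.card P := by
  simp [dilate, Multiset.card_bind, mul_comm]

theorem zerosBefore_le (β : List Bool) (j : ℕ) : zerosBefore β j ≤ j :=
  List.count_le_length.trans (List.length_take_le _ _)

theorem zerosBefore_mem_shapeOf {β : List Bool} {j : ℕ} (hj : β.getD j false = true)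
    (hpos : 0 < zerosBefore β j) : zerosBefore β j ∈ shapeOf β := by
  have hlen : j < β.length := by
    by_contra h
    rw [List.getD_eq_default _ _ (Nat.le_of_not_lt h)] at hj
    exact Bool.false_ne_true hj
  exact Multiset.mem_coe.2
    (List.mem_filterMap.2 ⟨j, List.mem_range.2 hlen, by rw [if_pos ⟨hj, hpos⟩]⟩)

/-- Each `true` after the leading `false` contributes a part of size at most its position. -/
theorem getD_eq_false_of_forall_mem_shapeOf_le {β : List Bool} {d : ℕ}
    (hhead : β.head? = some false) (hparts : ∀ a ∈ shapeOf β, d ≤ a) {j : ℕ} (hj : j < d) :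
    β.getD j false = false := by
  obtain ⟨t, rfl⟩ : ∃ t, β = false :: t := by
    cases β with
    | nil => cases hhead
    | cons x t => cases hhead; exact ⟨t, rfl⟩
  by_contra hβj
  rw [Bool.not_eq_false] at hβj
  have hpos : 0 < zerosBefore (false :: t) j := by
    cases j with
    | zero => cases hβj
    | succ k => simp [zerosBefore]
  have := hparts _ (zerosBefore_mem_shapeOf hβj hpos)
  have := zerosBefore_le (false :: t) j
  omega

theorem countP_range_getD_eq_count_true (β : List Bool) :
    (List.range β.length).countP (fun j => β.getD j false) = β.count true := by
  induction β with
  | nil => rfl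
  | cons x t ih =>
    rw [List.length_cons, List.range_succ_eq_map, List.countP_cons, List.countP_map,
      List.count_cons]
    have hshift : (fun j => (x :: t).getD j false) ∘ Nat.succ = fun j => t.getD j false := by
      funext j; simp
    rw [hshift, ih]
    cases x <;> simp

theorem card_shapeOf_le_count (β : List Bool) : Multiset.card (shapeOf β) ≤ β.count true := by
  rw [shapeOf, Multiset.coe_card, List.length_filterMap_eq_countP,
    ← countP_range_getD_eq_count_true]
  refine List.countP_mono_left fun j _ hj => ?_
  by_cases h : β.getD j false = true ∧ 0 < zerosBefore β j
  · exact h.1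
  · simp only [if_neg h, Option.isSome_none, Bool.false_eq_true] at hj

theorem count_true_set_true_set_false {r : List Bool} {a b : ℕ} (hab : a ≠ b)
    (ha : r.getD a true = false) (hb : r.getD b false = true) :
    ((r.set a true).set b false).count true = r.count true := by
  have hal : a < r.length := by
    by_contra h
    rw [List.getD_eq_default _ _ (Nat.le_of_not_lt h)] at ha
    exact Bool.noConfusion ha
  have hbl : b < r.length := by
    by_contra h
    rw [List.getD_eq_default _ _ (Nat.le_of_not_lt h)] at hb
    exact Bool.false_ne_true hb
  rw [List.getD_eq_getElem _ _ hal] at ha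
  rw [List.getD_eq_getElem _ _ hbl] at hb
  have hcount := List.count_set (a := true) (b := true) hal
  rw [List.count_set (by simpa using hbl), List.getElem_set_ne hab, hcount]
  simp [ha, hb]

theorem getD_applySwaps_of_forall_ne {j : ℕ} :
    ∀ {s : List (ℕ × ℕ)} {r : List Bool}, (∀ ab ∈ s, ab.1 ≠ j) → (∀ ab ∈ s, ab.2 ≠ j) →
      (applySwaps r s).getD j false = r.getD j false
  | [], _, _, _ => rfl
  | ab :: s, r, h1, h2 => by
    rw [applySwaps, List.foldl_cons, ← applySwaps,
      getD_applySwaps_of_forall_ne (fun x hx => h1 x (List.mem_cons_of_mem _ hx))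
        (fun x hx => h2 x (List.mem_cons_of_mem _ hx))]
    simp only [List.getD_eq_getElem?_getD, List.getElem?_set_ne (h2 ab List.mem_cons_self),
      List.getElem?_set_ne (h1 ab List.mem_cons_self)]

theorem cascadeRow_succ (C : Cascade) {i : ℕ} (hi : i < C.swaps.length) :
    cascadeRow C (i + 1) = ((cascadeRow C i).set (C.swaps.getD i (0, 0)).1 true).set
      (C.swaps.getD i (0, 0)).2 false := by
  rw [cascadeRow, cascadeRow, List.take_add_one, List.getElem?_eq_getElem hi,
    Option.toList_some, applySwaps, List.foldl_append, List.getD_eq_getElem _ _ hi]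
  rfl

theorem Cascade.Valid.count_true_cascadeBot {C : Cascade} (hC : C.Valid) :
    (cascadeBot C).count true = C.top.count true := by
  have hrow : ∀ i ≤ C.swaps.length, (cascadeRow C i).count true = C.top.count true := by
    intro i hi
    induction i with
    | zero => rfl
    | succ i ih =>
      obtain ⟨hab, -, ha, hb⟩ := hC.2.2.1 i hi
      rw [cascadeRow_succ C hi, count_true_set_true_set_false hab.ne ha hb,
        ih (Nat.le_of_succ_le hi)]
  rw [cascadeBot, ← List.take_length (l := C.swaps)]
  exact hrow _ le_rfl

theorem le_snd_of_mem_swaps {d : ℕ} {C : Cascade}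
    (hcontent : ∀ a ∈ cascadeContent C, 0 < a ∧ d ∣ a) {ab : ℕ × ℕ} (hab : ab ∈ C.swaps) :
    d ≤ ab.2 := by
  obtain ⟨hpos, hdvd⟩ := hcontent _ (List.mem_map_of_mem hab)
  exact (Nat.le_of_dvd hpos hdvd).trans (Nat.sub_le _ _)

theorem gammaMap_fst_of_actC_eq {d : ℕ} {σ : Equiv.Perm (Fin d)} {C : Cascade}
    (h : actC d σ C = C) {ab : ℕ × ℕ} (hab : ab ∈ C.swaps) : gammaMap d σ ab.1 = ab.1 := by
  have hswaps := (congrArg Cascade.swaps h).trans C.swaps.map_id.symm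
  exact congrArg Prod.fst (List.map_eq_map_iff.1 hswaps ab hab)

theorem gammaMap_val {d : ℕ} (hd : 0 < d) (σ : Equiv.Perm (Fin d)) (x : Fin d) :
    gammaMap d σ x = σ x := by
  simp [gammaMap, hd, Nat.div_eq_of_lt x.2, Nat.mod_eq_of_lt x.2]

theorem action_free_general (d n : ℕ) (hd : 0 < d) (hn : 0 < n)
    (lam : Multiset ℕ) (hlam : IsPartitionOf n lam)
    (alpha : List ℕ) (halpha : ∀ a ∈ alpha, 0 < a ∧ d ∣ a) :
    ∀ (σ : Equiv.Perm (Fin d)) (C : Cascade),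
      C.Valid → cascadeShape C = dilate d lam → cascadeContent C = alpha →
        actC d σ C = C → σ = 1 := by
  intro σ C hC hS hCt hact
  obtain ⟨u, v, hbot⟩ := hC.2.2.2
  have hlam0 : lam ≠ 0 := by
    rintro rfl
    exact hn.ne hlam.2
  have hdu : d ≤ u := calc
    d ≤ Multiset.card (dilate d lam) := by
      rw [card_dilate]
      exact Nat.le_mul_of_pos_right d (Multiset.card_pos.2 hlam0)
    _ = Multiset.card (shapeOf C.top) := by rw [← hS, cascadeShape]
    _ ≤ C.top.count true := card_shapeOf_le_count _
    _ = u := by simp [← hC.count_true_cascadeBot, hbot, List.count_replicate]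
  ext x
  obtain ⟨ab, hab, hx⟩ : ∃ ab ∈ C.swaps, ab.1 = x := by
    by_contra! hne
    have hcol := getD_applySwaps_of_forall_ne (r := C.top) hne
      fun ab hab => (x.2.trans_le (le_snd_of_mem_swaps (hCt ▸ halpha) hab)).ne'
    rw [← cascadeBot, hbot, getD_eq_false_of_forall_mem_shapeOf_le hC.1
      (fun a ha => le_of_mem_dilate hlam.1 (hS ▸ ha)) x.2] at hcol
    simp [List.getD_eq_getElem?_getD, List.getElem?_append_left, x.2.trans_le hdu] at hcol
  rw [← gammaMap_val hd, ← hx, gammaMap_fst_of_actC_eq hact hab, hx, Equiv.Perm.one_apply]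

/-- The S_d-action on cascades of shape 𝝀 and content α is free. -/
theorem action_free (d n : ℕ) (hd : 0 < d) (hn : 0 < n)
    (lam : Multiset ℕ) (hlam : IsPartitionOf n lam)
    (alpha : List ℕ) (halpha : ∀ a ∈ alpha, 0 < a ∧ d ∣ a) (hsum : alpha.sum = d ^ 2 * n) :
    ∀ (σ : Equiv.Perm (Fin d)) (C : Cascade),
      C.Valid → cascadeShape C = dilate d lam → cascadeContent C = alpha →
        actC d σ C = C → σ = 1 :=
  action_free_general d n hd hn lam hlam alpha halpha
end
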